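/- Let C be a finite abelian group of order n and let 0 < q ≤ 1. Then the algebra ℝ[C ∨ ℤ_q(2)], the real vector space with basis C ∪ {ℓ₁}, with the group multiplication on C and relations ε_c·ε_{ℓ₁} = ε_{ℓ₁} for c ∈ C and ε_{ℓ₁}·ε_{ℓ₁} = (q/n)·Σ_{c∈C} ε_c + (1−q)·ε_{ℓ₁}, is an associative commutative unital algebra. -/

import Mathlib

open Finset

section JoinAux

variable {C : Type*} [CommGroup C] [Fintype C]

/-- Augmentation homomorphism on the group algebra. -/
noncomputable def joinAug : MonoidAlgebra ℝ C →ₐ[ℝ] ℝ := MonoidAlgebra.lift ℝ ℝ C 1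

lemma joinAug_eq (f : MonoidAlgebra ℝ C) : joinAug f = ∑ c : C, f.coeff c := by
  rw [joinAug, MonoidAlgebra.lift_apply, Finsupp.sum_fintype] <;> simp

lemma joinS_mul (f g : MonoidAlgebra ℝ C) :
    ∑ c : C, (f * g).coeff c = (∑ c : C, f.coeff c) * (∑ c : C, g.coeff c) := by
  rw [← joinAug_eq, ← joinAug_eq, ← joinAug_eq, map_mul]

lemma joinS_add (f g : MonoidAlgebra ℝ C) :
    ∑ c : C, (f + g).coeff c = (∑ c : C, f.coeff c) + (∑ c : C, g.coeff c) := by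
  rw [← joinAug_eq, ← joinAug_eq, ← joinAug_eq, map_add]

lemma joinS_smul (a : ℝ) (f : MonoidAlgebra ℝ C) :
    ∑ c : C, (a • f).coeff c = a * ∑ c : C, f.coeff c := by
  rw [← joinAug_eq, ← joinAug_eq, map_smul, smul_eq_mul]

lemma joinS_T :
    ∑ c : C, (∑ d : C, MonoidAlgebra.single d (1:ℝ)).coeff c = (Fintype.card C : ℝ) := by
  rw [Finset.sum_congr rfl fun c _ => (congrArg (fun g => g c) (MonoidAlgebra.coeff_sum Finset.univ (fun d => MonoidAlgebra.single d (1:ℝ)))).trans (Finset.sum_apply' c)]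
  simp [Finsupp.single_apply]

lemma joinS_one : ∑ c : C, (MonoidAlgebra.single (1 : C) (1 : ℝ)).coeff c = 1 := by
  simp [MonoidAlgebra.coeff_single, Finsupp.single_apply]

lemma join_mul_T (f : MonoidAlgebra ℝ C) :
    f * (∑ c : C, MonoidAlgebra.single c (1:ℝ))
      = (∑ c : C, f.coeff c) • ∑ c : C, MonoidAlgebra.single c (1:ℝ) := by
  have hf : f = ∑ d : C, MonoidAlgebra.single d (f.coeff d) := by
    classical
    ext x
    rw [MonoidAlgebra.coeff_sum, Finset.sum_apply']
    rw [Finset.sum_congr rfl fun k _ => MonoidAlgebra.coeff_single_apply]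
    simp
  calc f * (∑ c : C, MonoidAlgebra.single c (1:ℝ))
      = ∑ d : C, ∑ c : C, MonoidAlgebra.single (d * c) (f.coeff d * 1) := by
        conv_lhs => rw [hf]
        rw [Finset.sum_mul]
        refine Finset.sum_congr rfl fun d _ => ?_
        rw [Finset.mul_sum]
        exact Finset.sum_congr rfl fun c _ => MonoidAlgebra.single_mul_single ..
    _ = ∑ d : C, (f.coeff d) • ∑ c : C, MonoidAlgebra.single c (1:ℝ) := by
        refine Finset.sum_congr rfl fun d _ => ?_
        rw [Finset.smul_sum]
        refine Fintype.sum_equiv (Equiv.mulLeft d) _ _ fun c => ?_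
        simp [MonoidAlgebra.smul_single']
    _ = _ := by rw [← Finset.sum_smul]

lemma join_T_mul (f : MonoidAlgebra ℝ C) :
    (∑ c : C, MonoidAlgebra.single c (1:ℝ)) * f
      = (∑ c : C, f.coeff c) • ∑ c : C, MonoidAlgebra.single c (1:ℝ) := by
  rw [mul_comm, join_mul_T]

end JoinAux

/-- Multiplication of the join algebra `ℝ[C ∨ ℤ_q(2)]` for a finite abelian
group `C` of order `n`: an element `Σ_c a_c ε_c + s·ε_{ℓ₁}` is represented by
the pair `(f, s)` with `f ∈ ℝ[C]`; the relations are `ε_c·ε_{c'} = ε_{cc'}`,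
`ε_c·ε_{ℓ₁} = ε_{ℓ₁}` and `ε_{ℓ₁}·ε_{ℓ₁} = (q/n)·Σ_{c∈C} ε_c + (1−q)·ε_{ℓ₁}`. -/
noncomputable def joinMul (q : ℝ) {C : Type*} [CommGroup C] [Fintype C]
    (x y : MonoidAlgebra ℝ C × ℝ) : MonoidAlgebra ℝ C × ℝ :=
  (x.1 * y.1 + (q * x.2 * y.2 / (Fintype.card C : ℝ)) •
      ∑ c : C, MonoidAlgebra.single c (1 : ℝ),
   (∑ c : C, x.1.coeff c) * y.2 + x.2 * (∑ c : C, y.1.coeff c) + (1 - q) * x.2 * y.2)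

/-- The join algebra `ℝ[C ∨ ℤ_q(2)]` is an associative commutative unital
algebra (with unit `ε_{e}` for `e` the identity of `C`). -/
theorem joinMul_assoc_comm_unital (q : ℝ) (hq0 : 0 < q) (hq1 : q ≤ 1)
    {C : Type*} [CommGroup C] [Fintype C] :
    (∀ x y z : MonoidAlgebra ℝ C × ℝ,
        joinMul q (joinMul q x y) z = joinMul q x (joinMul q y z)) ∧
    (∀ x y : MonoidAlgebra ℝ C × ℝ, joinMul q x y = joinMul q y x) ∧
    (∀ x : MonoidAlgebra ℝ C × ℝ,
        joinMul q ((MonoidAlgebra.single (1 : C) (1 : ℝ), 0)) x = x) := by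
  have hn : (Fintype.card C : ℝ) ≠ 0 := Nat.cast_ne_zero.mpr Fintype.card_ne_zero
  refine ⟨?_, ?_, ?_⟩
  · intro x y z
    obtain ⟨x1, x2⟩ := x; obtain ⟨y1, y2⟩ := y; obtain ⟨z1, z2⟩ := z
    simp only [joinMul, Prod.mk.injEq]
    constructor
    · have e1 : ∀ (f g : MonoidAlgebra ℝ C) (a : ℝ),
          (f + a • ∑ c : C, MonoidAlgebra.single c (1:ℝ)) * g
            = f * g + (a * ∑ c : C, g.coeff c) • ∑ c : C, MonoidAlgebra.single c (1:ℝ) := by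
        intro f g a
        rw [add_mul, smul_mul_assoc, join_T_mul, smul_smul]
      have e2 : ∀ (f g : MonoidAlgebra ℝ C) (a : ℝ),
          f * (g + a • ∑ c : C, MonoidAlgebra.single c (1:ℝ))
            = f * g + (a * ∑ c : C, f.coeff c) • ∑ c : C, MonoidAlgebra.single c (1:ℝ) := by
        intro f g a
        rw [mul_comm, e1, mul_comm g f]
      rw [e1, e2, mul_assoc x1 y1 z1]
      conv_lhs => rw [add_assoc, ← add_smul]
      conv_rhs => rw [add_assoc, ← add_smul]
      congr 1
      field_simp
      ring
    · rw [joinS_add, joinS_add, joinS_mul, joinS_mul, joinS_smul, joinS_smul, joinS_T]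
      field_simp
      ring
  · intro x y
    obtain ⟨x1, x2⟩ := x; obtain ⟨y1, y2⟩ := y
    simp only [joinMul, Prod.mk.injEq]
    exact ⟨by rw [mul_comm x1 y1]; ring_nf, by ring⟩
  · intro x
    obtain ⟨x1, x2⟩ := x
    simp only [joinMul, Prod.mk.injEq, joinS_one]
    constructor
    · rw [← MonoidAlgebra.one_def, one_mul]
      simp
    · ring
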